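/- Let W be the symmetric tridiagonal q×q matrix with diagonal entries W_{ss} = m·γ_s²(1-γ_s)²·(1/(γ_s - γ_{s-1}) + 1/(γ_{s+1} - γ_s)) and off-diagonal entries W_{s-1,s} = W_{s,s-1} = -m·γ_{s-1}(1-γ_{s-1})γ_s(1-γ_s)/(γ_s - γ_{s-1}), where 0 = γ_0 < γ_1 < ... < γ_q < γ_{q+1} = 1 and m > 0. Then the s-th diagonal entry of W⁻¹ equals 1/(m·γ_s·(1-γ_s)). -/

import Mathlib

/-!
Write `W = m • D T D` with `D = diag (γ_s (1 - γ_s))` and `T` the stiffness matrix of piecewise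
linear elements on the nodes `γ_0 < ⋯ < γ_{q+1}` with Dirichlet conditions at both ends. The
inverse of `T` is the discrete Green's function `G_{st} = γ_{min s t} (1 - γ_{max s t})`: as a
function of the node it vanishes at both ends and is linear between nodes, with a slope that drops
by exactly `1` at node `t`, and this drop is what `T` measures. Hence `W⁻¹ = m⁻¹ • D⁻¹ G D⁻¹`, whose
diagonal is `γ_s (1 - γ_s) / (m γ_s² (1 - γ_s)²)`.
-/

open Matrix

variable {K : Type*} [Field K]

def discreteLaplacian (x : ℕ → K) (n : ℕ) : (ℕ → K) →ₗ[K] K :=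
  let δ (k : ℕ) : (ℕ → K) →ₗ[K] K := LinearMap.proj k
  (x n - x (n - 1))⁻¹ • (δ n - δ (n - 1)) - (x (n + 1) - x n)⁻¹ • (δ (n + 1) - δ n)

theorem discreteLaplacian_apply (x φ : ℕ → K) (n : ℕ) :
    discreteLaplacian x n φ =
      (φ n - φ (n - 1)) / (x n - x (n - 1)) - (φ (n + 1) - φ n) / (x (n + 1) - x n) := by
  simp [discreteLaplacian, div_eq_inv_mul]

theorem discreteLaplacian_congr (x : ℕ → K) {n : ℕ} {φ ψ : ℕ → K}
    (h : ∀ k, n - 1 ≤ k → k ≤ n + 1 → φ k = ψ k) :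
    discreteLaplacian x n φ = discreteLaplacian x n ψ := by
  simp only [discreteLaplacian_apply, h n (by omega) (by omega), h (n - 1) le_rfl (by omega),
    h (n + 1) (by omega) le_rfl]

/-- Row and column `i` belong to the node `i + 1`; the nodes `0` and `q + 1` carry the Dirichlet
condition. -/
def stiffnessMatrix (x : ℕ → K) (q : ℕ) : Matrix (Fin q) (Fin q) K :=
  of fun i k => discreteLaplacian x (i + 1) (Pi.single (k + 1) 1)

variable {x : ℕ → K} {q : ℕ}

theorem stiffnessMatrix_apply_self (i : Fin q) :
    stiffnessMatrix x q i i = 1 / (x (i + 1) - x i) + 1 / (x (i + 2) - x (i + 1)) := by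
  simp only [stiffnessMatrix, of_apply, discreteLaplacian_apply, Pi.single_apply,
    Nat.add_sub_cancel, add_assoc, Nat.reduceAdd]
  split_ifs <;> first | (exfalso; omega) | ring

theorem stiffnessMatrix_apply_of_succ_eq {i j : Fin q} (h : (i : ℕ) + 1 = j) :
    stiffnessMatrix x q i j = -1 / (x (j + 1) - x (i + 1)) := by
  simp only [stiffnessMatrix, of_apply, discreteLaplacian_apply, Pi.single_apply, ← h,
    Nat.add_sub_cancel, add_assoc, Nat.reduceAdd]
  split_ifs <;> first | (exfalso; omega) | ring

theorem stiffnessMatrix_apply_of_eq_succ {i j : Fin q} (h : (i : ℕ) = j + 1) :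
    stiffnessMatrix x q i j = -1 / (x (i + 1) - x (j + 1)) := by
  simp only [stiffnessMatrix, of_apply, discreteLaplacian_apply, Pi.single_apply, h,
    Nat.add_sub_cancel, add_assoc, Nat.reduceAdd]
  split_ifs <;> first | (exfalso; omega) | ring

theorem stiffnessMatrix_apply_of_lt {i j : Fin q} (h : (i : ℕ) + 1 < j ∨ (j : ℕ) + 1 < i) :
    stiffnessMatrix x q i j = 0 := by
  simp only [stiffnessMatrix, of_apply, discreteLaplacian_apply, Pi.single_apply]
  rw [if_neg (by omega), if_neg (by omega), if_neg (by omega)]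
  simp

theorem sum_smul_single_apply {φ : ℕ → K} (h0 : φ 0 = 0) (hq : φ (q + 1) = 0) {n : ℕ}
    (hn : n ≤ q + 1) : (∑ k : Fin q, φ (k + 1) • Pi.single (k + 1 : ℕ) (1 : K)) n = φ n := by
  simp only [Finset.sum_apply, Pi.smul_apply, Pi.single_apply, smul_eq_mul, mul_ite, mul_one,
    mul_zero]
  rcases n with _ | n
  · simp [h0]
  rcases (Nat.succ_le_succ_iff.1 hn).lt_or_eq with hn | rfl
  · rw [Fintype.sum_eq_single ⟨n, hn⟩ fun k hk =>
      if_neg fun h => hk (Fin.ext (Nat.succ_injective h).symm)]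
    simp
  · exact (Finset.sum_eq_zero fun k _ => if_neg (by omega)).trans hq.symm

theorem stiffnessMatrix_mulVec {φ : ℕ → K} (h0 : φ 0 = 0) (hq : φ (q + 1) = 0) (i : Fin q) :
    (stiffnessMatrix x q *ᵥ fun k => φ (k + 1)) i = discreteLaplacian x (i + 1) φ := by
  calc (stiffnessMatrix x q *ᵥ fun k => φ (k + 1)) i
      = discreteLaplacian x (i + 1) (∑ k : Fin q, φ (k + 1) • Pi.single (k + 1 : ℕ) 1) := by
        simp [mulVec, dotProduct, stiffnessMatrix, mul_comm]
    _ = discreteLaplacian x (i + 1) φ :=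
        discreteLaplacian_congr x fun k _ hk => sum_smul_single_apply h0 hq (by omega)

def greenFunction (x : ℕ → K) (q p n : ℕ) : K :=
  (x (min n p) - x 0) * (x (q + 1) - x (max n p))

theorem greenFunction_succ_sub (x : ℕ → K) (q p n : ℕ) :
    greenFunction x q p (n + 1) - greenFunction x q p n =
      (x (n + 1) - x n) * if n < p then x (q + 1) - x p else x 0 - x p := by
  unfold greenFunction
  split_ifs with h
  · rw [min_eq_left h, min_eq_left h.le, max_eq_right h, max_eq_right h.le]; ring
  · push Not at h
    rw [min_eq_right h, min_eq_right (h.trans n.le_succ), max_eq_left h,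
      max_eq_left (h.trans n.le_succ)]; ring

theorem discreteLaplacian_greenFunction (x : ℕ → K) (q p : ℕ) {n : ℕ}
    (h₁ : x (n + 1) ≠ x n) (h₂ : x (n + 2) ≠ x (n + 1)) :
    discreteLaplacian x (n + 1) (greenFunction x q p) =
      if n + 1 = p then x (q + 1) - x 0 else 0 := by
  rw [discreteLaplacian_apply, Nat.add_sub_cancel, greenFunction_succ_sub, greenFunction_succ_sub,
    mul_div_cancel_left₀ _ (sub_ne_zero.2 h₁), mul_div_cancel_left₀ _ (sub_ne_zero.2 h₂)]
  split_ifs <;> first | (exfalso; omega) | ring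

def greenMatrix (x : ℕ → K) (q : ℕ) : Matrix (Fin q) (Fin q) K :=
  of fun i j => greenFunction x q (j + 1) (i + 1)

theorem stiffnessMatrix_mul_greenMatrix (hx : ∀ n ≤ q, x (n + 1) ≠ x n) :
    stiffnessMatrix x q * greenMatrix x q = (x (q + 1) - x 0) • 1 := by
  ext i j
  have h0 : greenFunction x q (j + 1) 0 = 0 := by simp [greenFunction]
  have hq : greenFunction x q (j + 1) (q + 1) = 0 := by simp [greenFunction]
  calc (stiffnessMatrix x q * greenMatrix x q) i j
      = (stiffnessMatrix x q *ᵥ fun k => greenFunction x q (j + 1) (k + 1)) i := rfl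
    _ = discreteLaplacian x (i + 1) (greenFunction x q (j + 1)) := stiffnessMatrix_mulVec h0 hq i
    _ = if (i : ℕ) + 1 = j + 1 then x (q + 1) - x 0 else 0 :=
        discreteLaplacian_greenFunction x q _ (hx i (by omega)) (hx (i + 1) (by omega))
    _ = ((x (q + 1) - x 0) • (1 : Matrix (Fin q) (Fin q) K)) i j := by
        simp [one_apply, Fin.ext_iff]

theorem smul_diagonal_mul_mul_diagonal_mul_eq_one {n : Type*} [Fintype n] [DecidableEq n]
    {c : K} (hc : c ≠ 0) {d : n → K} (hd : ∀ i, d i ≠ 0) {A B : Matrix n n K} (hAB : A * B = 1) :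
    c • (diagonal d * A * diagonal d) * (c⁻¹ • (diagonal d⁻¹ * B * diagonal d⁻¹)) = 1 := by
  have hdd : diagonal d * diagonal d⁻¹ = 1 := by
    rw [diagonal_mul_diagonal, ← diagonal_one]
    exact congrArg diagonal (funext fun i => mul_inv_cancel₀ (hd i))
  calc c • (diagonal d * A * diagonal d) * (c⁻¹ • (diagonal d⁻¹ * B * diagonal d⁻¹))
      = (c * c⁻¹) • (diagonal d * A * (diagonal d * diagonal d⁻¹) * B * diagonal d⁻¹) := by
        simp only [smul_mul_smul_comm, Matrix.mul_assoc]
    _ = 1 := by rw [mul_inv_cancel₀ hc, one_smul, hdd, Matrix.mul_one,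
        Matrix.mul_assoc (diagonal d) A B, hAB, Matrix.mul_one, hdd]

theorem eq_smul_diagonal_mul_stiffnessMatrix_mul_diagonal {q : ℕ} {m : ℝ} {γ : ℕ → ℝ}
    {W : Matrix (Fin q) (Fin q) ℝ}
    (hWdiag : ∀ i : Fin q,
      W i i = m * γ ((i : ℕ) + 1) ^ 2 * (1 - γ ((i : ℕ) + 1)) ^ 2 *
        (1 / (γ ((i : ℕ) + 1) - γ (i : ℕ)) + 1 / (γ ((i : ℕ) + 2) - γ ((i : ℕ) + 1))))
    (hWoff : ∀ i j : Fin q, (i : ℕ) + 1 = (j : ℕ) →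
      W i j = -m * γ ((i : ℕ) + 1) * (1 - γ ((i : ℕ) + 1)) * γ ((j : ℕ) + 1) *
        (1 - γ ((j : ℕ) + 1)) / (γ ((j : ℕ) + 1) - γ ((i : ℕ) + 1)))
    (hWsymm : ∀ i j : Fin q, W i j = W j i)
    (hWzero : ∀ i j : Fin q, (i : ℕ) + 1 < (j : ℕ) → W i j = 0) :
    W = m • (diagonal (fun i : Fin q => γ (i + 1) * (1 - γ (i + 1))) * stiffnessMatrix γ q *
      diagonal fun i : Fin q => γ (i + 1) * (1 - γ (i + 1))) := by
  ext i j
  simp only [Matrix.smul_apply, mul_diagonal, diagonal_mul, smul_eq_mul]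
  rcases lt_trichotomy (i : ℕ) j with hij | hij | hij
  · rcases (Nat.succ_le_of_lt hij).eq_or_lt with h | h
    · rw [hWoff i j h, stiffnessMatrix_apply_of_succ_eq h]; ring
    · rw [hWzero i j h, stiffnessMatrix_apply_of_lt (.inl h)]; ring
  · obtain rfl := Fin.ext hij
    rw [hWdiag, stiffnessMatrix_apply_self]; ring
  · rcases (Nat.succ_le_of_lt hij).eq_or_lt with h | h
    · rw [hWsymm, hWoff j i h, stiffnessMatrix_apply_of_eq_succ h.symm]; ring
    · rw [hWsymm, hWzero j i h, stiffnessMatrix_apply_of_lt (.inr h)]; ring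

theorem tridiagonal_inverse_diagonal_general
    (q : ℕ) (m : ℝ) (hm : 0 < m) (γ : ℕ → ℝ)
    (hγ0 : γ 0 = 0) (hγk : γ (q + 1) = 1)
    (hγmono : ∀ i j, i < j → j ≤ q + 1 → γ i < γ j)
    (W : Matrix (Fin q) (Fin q) ℝ)
    (hWdiag : ∀ i : Fin q,
      W i i = m * γ ((i : ℕ) + 1) ^ 2 * (1 - γ ((i : ℕ) + 1)) ^ 2 *
        (1 / (γ ((i : ℕ) + 1) - γ (i : ℕ)) + 1 / (γ ((i : ℕ) + 2) - γ ((i : ℕ) + 1))))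
    (hWoff : ∀ i j : Fin q, (i : ℕ) + 1 = (j : ℕ) →
      W i j = -m * γ ((i : ℕ) + 1) * (1 - γ ((i : ℕ) + 1)) * γ ((j : ℕ) + 1) *
        (1 - γ ((j : ℕ) + 1)) / (γ ((j : ℕ) + 1) - γ ((i : ℕ) + 1)))
    (hWsymm : ∀ i j : Fin q, W i j = W j i)
    (hWzero : ∀ i j : Fin q, (i : ℕ) + 1 < (j : ℕ) → W i j = 0) :
    IsUnit W.det ∧
      ∀ s : Fin q, W⁻¹ s s = 1 / (m * γ ((s : ℕ) + 1) * (1 - γ ((s : ℕ) + 1))) := by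
  have hγpos (s : Fin q) : γ (s + 1) ≠ 0 := (hγ0 ▸ hγmono 0 (s + 1) (by omega) (by omega)).ne'
  have hγlt (s : Fin q) : 1 - γ (s + 1) ≠ 0 :=
    sub_ne_zero.2 (hγk ▸ hγmono (s + 1) (q + 1) (by omega) le_rfl).ne'
  have hTG : stiffnessMatrix γ q * greenMatrix γ q = 1 := by
    simpa [hγ0, hγk] using stiffnessMatrix_mul_greenMatrix fun n (hn : n ≤ q) =>
      (hγmono n (n + 1) n.lt_succ_self (by omega)).ne'
  have hWM := eq_smul_diagonal_mul_stiffnessMatrix_mul_diagonal hWdiag hWoff hWsymm hWzero ▸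
    smul_diagonal_mul_mul_diagonal_mul_eq_one hm.ne' (fun s => mul_ne_zero (hγpos s) (hγlt s)) hTG
  refine ⟨isUnit_det_of_right_inverse hWM, fun s => ?_⟩
  rw [inv_eq_right_inv hWM, Matrix.smul_apply, mul_diagonal, diagonal_mul]
  simp only [greenMatrix, greenFunction, of_apply, min_self, max_self, hγ0, hγk, sub_zero,
    Pi.inv_apply, smul_eq_mul]
  field_simp

/-- The `s`-th diagonal entry of the inverse of the symmetric tridiagonal matrix of
quadratic weights for the cumulative logits equals `1/(m γ_s (1 - γ_s))`. Here the
`q × q` matrix `W` is indexed by `Fin q`, with index `i` corresponding to the cutpoint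
index `s = i + 1`, and `γ : ℕ → ℝ` with `γ 0 = 0 < γ 1 < ... < γ q < γ (q+1) = 1`. -/
theorem tridiagonal_inverse_diagonal
    (q : ℕ) (hq : 1 ≤ q) (m : ℝ) (hm : 0 < m) (γ : ℕ → ℝ)
    (hγ0 : γ 0 = 0) (hγk : γ (q + 1) = 1)
    (hγmono : ∀ i j, i < j → j ≤ q + 1 → γ i < γ j)
    (W : Matrix (Fin q) (Fin q) ℝ)
    (hWdiag : ∀ i : Fin q,
      W i i = m * γ ((i : ℕ) + 1) ^ 2 * (1 - γ ((i : ℕ) + 1)) ^ 2 *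
        (1 / (γ ((i : ℕ) + 1) - γ (i : ℕ)) + 1 / (γ ((i : ℕ) + 2) - γ ((i : ℕ) + 1))))
    (hWoff : ∀ i j : Fin q, (i : ℕ) + 1 = (j : ℕ) →
      W i j = -m * γ ((i : ℕ) + 1) * (1 - γ ((i : ℕ) + 1)) * γ ((j : ℕ) + 1) *
        (1 - γ ((j : ℕ) + 1)) / (γ ((j : ℕ) + 1) - γ ((i : ℕ) + 1)))
    (hWsymm : ∀ i j : Fin q, W i j = W j i)
    (hWzero : ∀ i j : Fin q, (i : ℕ) + 1 < (j : ℕ) → W i j = 0) :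
    IsUnit W.det ∧
      ∀ s : Fin q, W⁻¹ s s = 1 / (m * γ ((s : ℕ) + 1) * (1 - γ ((s : ℕ) + 1))) :=
  tridiagonal_inverse_diagonal_general q m hm γ hγ0 hγk hγmono W hWdiag hWoff hWsymm hWzero
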